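/- Suppose α ≥ 2 and 0 < ε < 1/5. Then every feasible path σ for the promenade problem contains a point σ(s) whose first coordinate equals α/2 + 1 and whose second coordinate y satisfies either y < 1 or y > α + 1; that is, every feasible path crosses the vertical line x = α/2 + 1 either below or above the obstacle. -/

import Mathlib

/-- A point of the plane `ℝ²` (as a Euclidean space) with given coordinates. -/
noncomputable def pt (x y : ℝ) : EuclideanSpace ℝ (Fin 2) := WithLp.toLp 2 ![x, y]

/-! Intermediate value theorem for the first coordinate: the path must cross the midline, and the
crossing point cannot lie on the obstacle's side `{α/2 + 1} × [1, α + 1]`. -/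

@[simp]
theorem pt_apply_zero (x y : ℝ) : pt x y 0 = x := rfl

@[simp]
theorem pt_apply_one (x y : ℝ) : pt x y 1 = y := rfl

theorem exists_mem_Icc_apply_eq_of_continuousOn {ι : Type*} {σ : ℝ → EuclideanSpace ℝ ι}
    {a b c : ℝ} (i : ι) (hab : a ≤ b) (hσ : ContinuousOn σ (Set.Icc a b))
    (hc : c ∈ Set.Icc (σ a i) (σ b i)) : ∃ s ∈ Set.Icc a b, σ s i = c :=
  intermediate_value_Icc hab ((EuclideanSpace.proj i).continuous.comp_continuousOn hσ) hc

theorem promenade_crosses_midline_general (α ε : ℝ) (hα : 2 ≤ α) (hε0 : 0 < ε)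
    (σ : ℝ → EuclideanSpace ℝ (Fin 2))
    (hcont : ContinuousOn σ (Set.Icc 0 1))
    (hinit : σ 0 = pt (1 - ε) (1 + 2*ε))
    (hgoal : σ 1 = pt (α + 1 + ε) (1 + 2*ε))
    (hfree : ∀ s ∈ Set.Icc (0:ℝ) 1,
      (σ s 0 ∈ Set.Icc (0:ℝ) (α+2) ∧ σ s 1 ∈ Set.Icc (0:ℝ) (α+2)) ∧
      ¬(σ s 0 ∈ Set.Icc (1:ℝ) (α+1) ∧ σ s 1 ∈ Set.Icc (1:ℝ) (α+1))) :
    ∃ s ∈ Set.Icc (0:ℝ) 1, σ s 0 = α/2 + 1 ∧ (σ s 1 < 1 ∨ α + 1 < σ s 1) := by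
  have hmid : α/2 + 1 ∈ Set.Icc (σ 0 0) (σ 1 0) := by
    rw [hinit, hgoal, pt_apply_zero, pt_apply_zero]
    constructor <;> linarith
  obtain ⟨s, hs, hcross⟩ := exists_mem_Icc_apply_eq_of_continuousOn 0 zero_le_one hcont hmid
  have hmid_side : σ s 0 ∈ Set.Icc (1:ℝ) (α+1) := by
    rw [hcross]
    constructor <;> linarith
  have hy : σ s 1 ∉ Set.Icc (1:ℝ) (α+1) := fun hy => (hfree s hs).2 ⟨hmid_side, hy⟩
  rw [Set.mem_Icc, not_and_or, not_le, not_le] at hy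
  exact ⟨s, hs, hcross, hy⟩

/-- In the promenade problem (configuration space `X = [0,α+2]²`, obstacle
`X_obs = [1,α+1]²`, `X_free = X \ X_obs`, `X_init = (1−ε, 1+2ε)`,
`X_goal = (α+1+ε, 1+2ε)`, with `α ≥ 2`, `0 < ε < 1/5`), every feasible path
(continuous, of bounded variation, from `X_init` to `X_goal`, staying in `X_free`)
contains a point whose first coordinate is `α/2 + 1` and whose second coordinate is
either `< 1` or `> α + 1`: it crosses the vertical line `x = α/2 + 1`
below or above the obstacle. -/
theorem promenade_crosses_midline (α ε : ℝ) (hα : 2 ≤ α) (hε0 : 0 < ε) (hε1 : ε < 1/5)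
    (σ : ℝ → EuclideanSpace ℝ (Fin 2))
    (hcont : ContinuousOn σ (Set.Icc 0 1))
    (hbv : BoundedVariationOn σ (Set.Icc 0 1))
    (hinit : σ 0 = pt (1 - ε) (1 + 2*ε))
    (hgoal : σ 1 = pt (α + 1 + ε) (1 + 2*ε))
    (hfree : ∀ s ∈ Set.Icc (0:ℝ) 1,
      (σ s 0 ∈ Set.Icc (0:ℝ) (α+2) ∧ σ s 1 ∈ Set.Icc (0:ℝ) (α+2)) ∧
      ¬(σ s 0 ∈ Set.Icc (1:ℝ) (α+1) ∧ σ s 1 ∈ Set.Icc (1:ℝ) (α+1))) :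
    ∃ s ∈ Set.Icc (0:ℝ) 1, σ s 0 = α/2 + 1 ∧ (σ s 1 < 1 ∨ α + 1 < σ s 1) :=
  promenade_crosses_midline_general α ε hα hε0 σ hcont hinit hgoal hfree
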